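/- Let r ∈ 𝒟 = {r ∈ 𝒢 : I(r) = 1, P(r) = 0, H(r) = 0}. Then there exist real numbers λ, η with ∇U(r) = λ M ∇I(r) + η ∇H(r) if and only if there exist real numbers λ, σ with ∇U(r) = λ M ∇I(r) + σ ∇P(r), where all gradients are taken with respect to the six variables (r₁₂, r₁₃, r₁₄, r₂₃, r₂₄, r₃₄). That is, r is a critical point of U restricted to {I = 1, H = 0} if and only if it is a critical point of U restricted to {I = 1, P = 0}. -/

import Mathlib

/-- The Cayley–Menger determinant as a function of
`r = (r₁₂, r₁₃, r₁₄, r₂₃, r₂₄, r₃₄) ∈ ℝ⁶`. -/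
noncomputable def Hvec (r : Fin 6 → ℝ) : ℝ :=
  Matrix.det !![(0:ℝ), 1, 1, 1, 1;
                1, 0, (r 0)^2, (r 1)^2, (r 2)^2;
                1, (r 0)^2, 0, (r 3)^2, (r 4)^2;
                1, (r 1)^2, (r 3)^2, 0, (r 5)^2;
                1, (r 2)^2, (r 4)^2, (r 5)^2, 0]

/-- The Ptolemy function `P` as a function of `r ∈ ℝ⁶`. -/
def Pvec (r : Fin 6 → ℝ) : ℝ :=
  r 0 * r 5 + r 2 * r 3 - r 1 * r 4

/-- The Newtonian potential `U` as a function of `r ∈ ℝ⁶`. -/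
noncomputable def Uvec (m1 m2 m3 m4 : ℝ) (r : Fin 6 → ℝ) : ℝ :=
  m1*m2/(r 0) + m1*m3/(r 1) + m1*m4/(r 2) +
  m2*m3/(r 3) + m2*m4/(r 4) + m3*m4/(r 5)

/-- The moment of inertia `I` as a function of `r ∈ ℝ⁶`. -/
noncomputable def Ivec (m1 m2 m3 m4 : ℝ) (r : Fin 6 → ℝ) : ℝ :=
  (1/(2*(m1 + m2 + m3 + m4))) *
    (m1*m2*(r 0)^2 + m1*m3*(r 1)^2 + m1*m4*(r 2)^2 +
     m2*m3*(r 3)^2 + m2*m4*(r 4)^2 + m3*m4*(r 5)^2)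

/-- Membership in `𝒢` for `r ∈ ℝ⁶`. -/
noncomputable def memG (r : Fin 6 → ℝ) : Prop :=
  (∀ i, 0 < r i) ∧ 0 ≤ Hvec r ∧
  r 0 + r 3 > r 1 ∧ r 0 + r 1 > r 3 ∧ r 1 + r 3 > r 0 ∧
  r 0 + r 4 > r 2 ∧ r 0 + r 2 > r 4 ∧ r 2 + r 4 > r 0 ∧
  r 1 + r 5 > r 2 ∧ r 1 + r 2 > r 5 ∧ r 2 + r 5 > r 1 ∧
  r 3 + r 5 > r 4 ∧ r 3 + r 4 > r 5 ∧ r 4 + r 5 > r 3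

/-!
`r₁₃² H` is a quartic polynomial `Φ` in `X = r₁₃ r₂₄` whose coefficients involve only the other
distances, and `Φ(r₁₂ r₃₄ + r₁₄ r₂₃) = -2 g²`, where `g = 0` is the diagonal formula of a cyclic
quadrilateral. As `X + P = r₁₂ r₃₄ + r₁₄ r₂₃`, this gives `r₁₃² H + 2 g² = P q`. Where `H = P = 0`
the identity forces `g = 0`, and differentiating it gives `r₁₃² ∇H = q ∇P`. There
`q = -2 r₁₃ r₂₄ ∂H/∂(r₂₄²)`, and the discriminant of `H` as a quadratic in `r₂₄²` shows that there
`(∂H/∂(r₂₄²))² = 4 h₁₂₃ h₁₃₄`, the Heron quantities of the two triangles on the diagonal `13`, which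
are positive by the triangle inequalities. So `∇H` is a nonzero multiple of `∇P`.
-/

theorem fderiv_smul_eq_of_mul_add_sq_eq {E : Type*} [NormedAddCommGroup E] [NormedSpace ℝ E]
    {w h g p q : E → ℝ} {x : E} (c : ℝ) (hw : DifferentiableAt ℝ w x)
    (hh : DifferentiableAt ℝ h x) (hg : DifferentiableAt ℝ g x) (hp : DifferentiableAt ℝ p x)
    (hq : DifferentiableAt ℝ q x) (hid : ∀ y, w y * h y + c * g y ^ 2 = p y * q y)
    (hx : h x = 0) (gx : g x = 0) (px : p x = 0) :
    w x • fderiv ℝ h x = q x • fderiv ℝ p x := by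
  have hl := ((hw.hasFDerivAt.mul hh.hasFDerivAt).add
    ((hg.hasFDerivAt.pow 2).const_mul c)).congr_of_eventuallyEq
    (Filter.Eventually.of_forall fun y => (hid y).symm)
  simpa [hx, gx, px] using hl.unique (hp.hasFDerivAt.mul hq.hasFDerivAt)

theorem exists_add_smul_iff_of_eq_smul {K V : Type*} [Field K] [AddCommGroup V] [Module K V]
    {a b : V} {κ : K} (hκ : κ ≠ 0) (hab : a = κ • b) (u v : V) :
    (∃ t : K, u = v + t • a) ↔ ∃ t : K, u = v + t • b := by
  subst hab
  constructor
  · rintro ⟨t, rfl⟩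
    exact ⟨t * κ, by rw [smul_smul]⟩
  · rintro ⟨t, rfl⟩
    exact ⟨t / κ, by rw [smul_smul, div_mul_cancel₀ t hκ]⟩

/-- Sixteen times the squared area of a triangle with side lengths `x`, `y`, `z`. -/
def heron (x y z : ℝ) : ℝ := 2*x^2*y^2 + 2*y^2*z^2 + 2*z^2*x^2 - x^4 - y^4 - z^4

theorem heron_pos {x y z : ℝ} (h₁ : z < x + y) (h₂ : y < x + z) (h₃ : x < z + y) :
    0 < heron x y z := by
  have hfac : heron x y z = (x + y + z) * (y + z - x) * (x + z - y) * (x + y - z) := by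
    unfold heron; ring
  rw [hfac]
  have : 0 < x + y + z := by linarith
  have : 0 < y + z - x := by linarith
  have : 0 < x + z - y := by linarith
  have : 0 < x + y - z := by linarith
  positivity

theorem Hvec_eq (r : Fin 6 → ℝ) : Hvec r =
    -2*r 0^4*r 5^2 - 2*r 0^2*r 1^2*r 3^2 + 2*r 0^2*r 1^2*r 4^2 + 2*r 0^2*r 1^2*r 5^2
    + 2*r 0^2*r 2^2*r 3^2 - 2*r 0^2*r 2^2*r 4^2 + 2*r 0^2*r 2^2*r 5^2 + 2*r 0^2*r 3^2*r 5^2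
    + 2*r 0^2*r 4^2*r 5^2 - 2*r 0^2*r 5^4 - 2*r 1^4*r 4^2 + 2*r 1^2*r 2^2*r 3^2
    + 2*r 1^2*r 2^2*r 4^2 - 2*r 1^2*r 2^2*r 5^2 + 2*r 1^2*r 3^2*r 4^2 - 2*r 1^2*r 4^4
    + 2*r 1^2*r 4^2*r 5^2 - 2*r 2^4*r 3^2 - 2*r 2^2*r 3^4 + 2*r 2^2*r 3^2*r 4^2
    + 2*r 2^2*r 3^2*r 5^2 - 2*r 3^2*r 4^2*r 5^2 := by
  simp [Hvec, Matrix.det_succ_row_zero, Fin.sum_univ_succ, Fin.succAbove]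
  ring

theorem differentiable_Hvec : Differentiable ℝ Hvec := by
  rw [show Hvec = _ from funext Hvec_eq]
  fun_prop

theorem differentiable_Pvec : Differentiable ℝ Pvec := by
  unfold Pvec
  fun_prop

/-- Vanishes exactly when the diagonal `r₁₃` of the quadrilateral `1234` obeys the formula for
cyclic quadrilaterals, `r₁₃² (r₁₂ r₂₃ + r₁₄ r₃₄) = (r₁₂ r₃₄ + r₁₄ r₂₃) (r₁₂ r₁₄ + r₂₃ r₃₄)`. -/
def cyclicDefect (r : Fin 6 → ℝ) : ℝ :=
  r 1^2 * (r 0 * r 3 + r 2 * r 5) - (r 0 * r 5 + r 2 * r 3) * (r 0 * r 2 + r 3 * r 5)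

/-- The partial derivative of `H` with respect to `r₂₄²` (`H` is quadratic in `r₂₄²`, with
leading coefficient `-2 r₁₃²`). -/
def cmSlope (r : Fin 6 → ℝ) : ℝ :=
  2 * (r 1^2 * (r 0^2 + r 2^2 + r 3^2 + r 5^2 - r 1^2) + (r 0^2 - r 3^2) * (r 5^2 - r 2^2))
    - 4 * r 1^2 * r 4^2

theorem sq_mul_Hvec_add_two_mul_cyclicDefect_sq (r : Fin 6 → ℝ) :
    r 1^2 * Hvec r + 2 * cyclicDefect r ^ 2 =
      Pvec r * (-(r 0 * r 5 + r 2 * r 3 + r 1 * r 4) *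
        (cmSlope r - 2 * Pvec r * (r 0 * r 5 + r 2 * r 3 + r 1 * r 4))) := by
  rw [Hvec_eq]
  unfold Pvec cyclicDefect cmSlope
  ring

theorem cmSlope_sq_add_eight_mul_Hvec (r : Fin 6 → ℝ) :
    cmSlope r ^ 2 + 8 * r 1^2 * Hvec r = 4 * heron (r 0) (r 3) (r 1) * heron (r 1) (r 5) (r 2) := by
  rw [Hvec_eq]
  unfold cmSlope heron
  ring

theorem cyclicDefect_eq_zero {r : Fin 6 → ℝ} (hP : Pvec r = 0) (hH : Hvec r = 0) :
    cyclicDefect r = 0 := by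
  simpa [hP, hH] using sq_mul_Hvec_add_two_mul_cyclicDefect_sq r

theorem fderiv_Hvec_eq_smul {r : Fin 6 → ℝ} (hP : Pvec r = 0) (hH : Hvec r = 0) (h1 : r 1 ≠ 0) :
    fderiv ℝ Hvec r = (-2 * r 4 * cmSlope r / r 1) • fderiv ℝ Pvec r := by
  have hsq := fderiv_smul_eq_of_mul_add_sq_eq (w := fun y => y 1 ^ 2)
    (q := fun y => -(y 0 * y 5 + y 2 * y 3 + y 1 * y 4) *
      (cmSlope y - 2 * Pvec y * (y 0 * y 5 + y 2 * y 3 + y 1 * y 4)))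
    2 (by fun_prop) differentiable_Hvec.differentiableAt (by unfold cyclicDefect; fun_prop)
    differentiable_Pvec.differentiableAt (by unfold cmSlope Pvec; fun_prop)
    sq_mul_Hvec_add_two_mul_cyclicDefect_sq hH (cyclicDefect_eq_zero hP hH) hP
  have hq : -(r 0 * r 5 + r 2 * r 3 + r 1 * r 4) *
      (cmSlope r - 2 * Pvec r * (r 0 * r 5 + r 2 * r 3 + r 1 * r 4))
        = r 1 ^ 2 * (-2 * r 4 * cmSlope r / r 1) := by
    rw [hP]
    unfold Pvec at hP
    field_simp
    linear_combination (-cmSlope r) * hP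
  rw [hq, ← smul_smul] at hsq
  exact smul_right_injective _ (pow_ne_zero 2 h1) hsq

theorem cmSlope_ne_zero {r : Fin 6 → ℝ} (hH : Hvec r = 0) (h₁ : 0 < heron (r 0) (r 3) (r 1))
    (h₂ : 0 < heron (r 1) (r 5) (r 2)) : cmSlope r ≠ 0 := by
  have hsq := cmSlope_sq_add_eight_mul_Hvec r
  rw [hH, mul_zero, add_zero] at hsq
  exact pow_ne_zero_iff two_ne_zero |>.mp (by rw [hsq]; positivity)

theorem critical_N_iff_critical_Mplus_general (m1 m2 m3 m4 : ℝ)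
    (r : Fin 6 → ℝ) (hG : memG r)
    (hP : Pvec r = 0) (hH : Hvec r = 0) :
    (∃ lam eta : ℝ,
        fderiv ℝ (Uvec m1 m2 m3 m4) r =
          (lam * (m1 + m2 + m3 + m4)) • fderiv ℝ (Ivec m1 m2 m3 m4) r
            + eta • fderiv ℝ Hvec r) ↔
    (∃ lam sig : ℝ,
        fderiv ℝ (Uvec m1 m2 m3 m4) r =
          (lam * (m1 + m2 + m3 + m4)) • fderiv ℝ (Ivec m1 m2 m3 m4) r
            + sig • fderiv ℝ Pvec r) := by
  obtain ⟨hpos, -, h₁₂₃, h₁₂₃', h₁₂₃'', -, -, -, h₁₃₄, h₁₃₄', h₁₃₄'', -, -, -⟩ := hG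
  have hslope : cmSlope r ≠ 0 :=
    cmSlope_ne_zero hH (heron_pos h₁₂₃ h₁₂₃' h₁₂₃'') (heron_pos h₁₃₄ h₁₃₄' h₁₃₄'')
  have hκ : -2 * r 4 * cmSlope r / r 1 ≠ 0 :=
    div_ne_zero (mul_ne_zero (mul_ne_zero (by norm_num) (hpos 4).ne') hslope) (hpos 1).ne'
  exact exists_congr fun lam =>
    exists_add_smul_iff_of_eq_smul hκ (fderiv_Hvec_eq_smul hP hH (hpos 1).ne') _ _

/-- For `r ∈ 𝒟 = {r ∈ 𝒢 : I(r) = 1, P(r) = 0, H(r) = 0}`, `r` is a critical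
point of `U` restricted to `{I = 1, H = 0}` if and only if it is a critical
point of `U` restricted to `{I = 1, P = 0}` (via Lagrange multipliers). -/
theorem critical_N_iff_critical_Mplus (m1 m2 m3 m4 : ℝ)
    (hm1 : 0 < m1) (hm2 : 0 < m2) (hm3 : 0 < m3) (hm4 : 0 < m4)
    (r : Fin 6 → ℝ) (hG : memG r)
    (hI : Ivec m1 m2 m3 m4 r = 1) (hP : Pvec r = 0) (hH : Hvec r = 0) :
    (∃ lam eta : ℝ,
        fderiv ℝ (Uvec m1 m2 m3 m4) r =
          (lam * (m1 + m2 + m3 + m4)) • fderiv ℝ (Ivec m1 m2 m3 m4) r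
            + eta • fderiv ℝ Hvec r) ↔
    (∃ lam sig : ℝ,
        fderiv ℝ (Uvec m1 m2 m3 m4) r =
          (lam * (m1 + m2 + m3 + m4)) • fderiv ℝ (Ivec m1 m2 m3 m4) r
            + sig • fderiv ℝ Pvec r) :=
  critical_N_iff_critical_Mplus_general m1 m2 m3 m4 r hG hP hH
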